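/- arXiv:2512.15024 — 2 statements merged into one kernel-verified Lean document; each statement's English description precedes it below -/
import Mathlib

section
/- Let |N| > 2. Then no allotment rule on the universal domain of preferences with a unique global maximum satisfies efficiency, own-peak-onliness, and non-bossiness simultaneously. -/
open Finset

/-- A preference: a total preorder on ℝ₊ with a unique global maximum (peak). -/
structure Pref where
  R : ℝ → ℝ → Prop
  total : ∀ x y : ℝ, 0 ≤ x → 0 ≤ y → R x y ∨ R y x
  trans : ∀ x y z : ℝ, R x y → R y z → R x z
  peak : ℝ
  peak_nonneg : 0 ≤ peak
  peak_max : ∀ x : ℝ, 0 ≤ x → R peak x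
  peak_unique : ∀ x : ℝ, 0 ≤ x → R x peak → x = peak

/-- Strict preference. -/
def Pref.P (r : Pref) (x y : ℝ) : Prop := r.R x y ∧ ¬ r.R y x

variable {n : ℕ}

/-- Feasible allotments: nonnegative, summing to the social endowment Ω. -/
def Feasible (Ω : ℝ) (x : Fin n → ℝ) : Prop :=
  (∀ i, 0 ≤ x i) ∧ ∑ i, x i = Ω

/-- Efficiency (Pareto optimality) of a rule. -/
def Efficient (Ω : ℝ) (φ : (Fin n → Pref) → Fin n → ℝ) : Prop :=
  ∀ R : Fin n → Pref, ¬ ∃ x : Fin n → ℝ, Feasible Ω x ∧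
    (∀ i, (R i).R (x i) (φ R i)) ∧ (∃ i, (R i).P (x i) (φ R i))

/-- Strategy-proofness. -/
def StrategyProof (φ : (Fin n → Pref) → Fin n → ℝ) : Prop :=
  ∀ (R : Fin n → Pref) (i : Fin n) (Ri' : Pref),
    (R i).R (φ R i) (φ (Function.update R i Ri') i)

/-- Own-peak-onliness. -/
def OwnPeakOnly (φ : (Fin n → Pref) → Fin n → ℝ) : Prop :=
  ∀ (R : Fin n → Pref) (i : Fin n) (Ri' : Pref),
    Ri'.peak = (R i).peak → φ (Function.update R i Ri') i = φ R i

/-- Option set of agent `i` with preference `Ri` at rule `φ`. -/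
def OptionSet (φ : (Fin n → Pref) → Fin n → ℝ) (i : Fin n) (Ri : Pref) : Set ℝ :=
  {x | ∃ R : Fin n → Pref, R i = Ri ∧ φ R i = x}

/-- `Ri'` is a manipulation of `φ` at `Ri` (for agent `i`). -/
def Manipulation (φ : (Fin n → Pref) → Fin n → ℝ) (i : Fin n) (Ri Ri' : Pref) : Prop :=
  ∃ R : Fin n → Pref, R i = Ri ∧ Ri.P (φ (Function.update R i Ri') i) (φ R i)

/-- `Ri'` is an obvious manipulation of `φ` at `Ri`. -/
def ObviousManipulation (φ : (Fin n → Pref) → Fin n → ℝ) (i : Fin n) (Ri Ri' : Pref) : Prop :=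
  Manipulation φ i Ri Ri' ∧
  ∀ x' ∈ OptionSet φ i Ri', ∃ x ∈ OptionSet φ i Ri, Ri.P x' x

/-- Non-obvious manipulability. -/
def NonObviouslyManipulable (φ : (Fin n → Pref) → Fin n → ℝ) : Prop :=
  ∀ (i : Fin n) (Ri Ri' : Pref), ¬ ObviousManipulation φ i Ri Ri'

/-- Equal division lower bound. -/
def EqualDivisionLowerBound (Ω : ℝ) (φ : (Fin n → Pref) → Fin n → ℝ) : Prop :=
  ∀ (R : Fin n → Pref) (i : Fin n), (R i).R (φ R i) (Ω / n)

/-- Equal division guarantee. -/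
def EqualDivisionGuarantee (Ω : ℝ) (φ : (Fin n → Pref) → Fin n → ℝ) : Prop :=
  ∀ (R : Fin n → Pref) (i : Fin n), (R i).peak = Ω / n → φ R i = Ω / n

/-- Unanimity. -/
def Unanimity (Ω : ℝ) (φ : (Fin n → Pref) → Fin n → ℝ) : Prop :=
  ∀ R : Fin n → Pref, ∑ i, (R i).peak = Ω → ∀ i, φ R i = (R i).peak

/-- Non-bossiness. -/
def NonBossy (φ : (Fin n → Pref) → Fin n → ℝ) : Prop :=
  ∀ (R : Fin n → Pref) (i : Fin n) (Ri' : Pref),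
    φ (Function.update R i Ri') i = φ R i → φ (Function.update R i Ri') = φ R

/-- `S` is an agreeable coalition for profile `R`. -/
def AgreeableCoalition (Ω : ℝ) (R : Fin n → Pref) (S : Finset (Fin n)) : Prop :=
  ∑ j ∈ S, (R j).peak = (S.card : ℝ) / n * Ω

/-- An agreeable selection. -/
def AgreeableSelection (Ω : ℝ) (S : (Fin n → Pref) → Finset (Fin n)) : Prop :=
  (∀ R, AgreeableCoalition Ω R (S R)) ∧
  (∀ (R : Fin n → Pref) (i : Fin n) (Ri' : Pref), Ri'.peak = (R i).peak →
    (i ∈ S R ↔ i ∈ S (Function.update R i Ri'))) ∧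
  (∀ R : Fin n → Pref, AgreeableCoalition Ω R Finset.univ → S R = Finset.univ)

/-- `φ` is an agreeable rule. -/
def IsAgreeableRule (Ω : ℝ) (φ : (Fin n → Pref) → Fin n → ℝ) : Prop :=
  ∃ S : (Fin n → Pref) → Finset (Fin n), AgreeableSelection Ω S ∧
    ∀ R i, φ R i = if i ∈ S R then (R i).peak else Ω / n

/-! ### Auxiliary machinery -/

/-- Utility function with peak `p` and second-best point `a`. -/
noncomputable def uFn (p a x : ℝ) : ℝ := if x = p then 2 else if x = a then 1 else 0

lemma uFn_le_two (p a x : ℝ) : uFn p a x ≤ 2 := by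
  unfold uFn; split_ifs <;> norm_num

lemma uFn_peak (p a : ℝ) : uFn p a p = 2 := if_pos rfl

/-- Preference induced by `uFn p a`. -/
noncomputable def mkPref (p a : ℝ) (hp : 0 ≤ p) : Pref where
  R x y := uFn p a y ≤ uFn p a x
  total x y _ _ := le_total _ _
  trans x y z h1 h2 := le_trans h2 h1
  peak := p
  peak_nonneg := hp
  peak_max x _ := by
    show uFn p a x ≤ uFn p a p
    rw [uFn_peak]; exact uFn_le_two p a x
  peak_unique x _ h := by
    replace h : uFn p a p ≤ uFn p a x := h
    rw [uFn_peak] at h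
    unfold uFn at h
    split_ifs at h with h1 h2
    · exact h1
    · norm_num at h
    · norm_num at h

lemma mkPref_refl (p a x : ℝ) (hp : 0 ≤ p) : (mkPref p a hp).R x x := le_refl _

lemma mkPref_P (p a b : ℝ) (hp : 0 ≤ p) (hbp : b ≠ p) (hba : b ≠ a) :
    (mkPref p a hp).P a b := by
  have hb : uFn p a b = 0 := by unfold uFn; rw [if_neg hbp, if_neg hba]
  have ha : (1 : ℝ) ≤ uFn p a a := by
    unfold uFn
    by_cases h : a = p
    · rw [if_pos h]; norm_num
    · rw [if_neg h, if_pos rfl]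
  constructor
  · show uFn p a b ≤ uFn p a a
    rw [hb]; linarith
  · show ¬ (uFn p a a ≤ uFn p a b)
    rw [hb]; intro h; linarith

/-- Own-peak-onliness plus non-bossiness implies the rule depends only on peaks. -/
lemma peak_only {n : ℕ} (φ : (Fin n → Pref) → Fin n → ℝ)
    (hop : OwnPeakOnly φ) (hnb : NonBossy φ)
    (R R' : Fin n → Pref) (h : ∀ i, (R' i).peak = (R i).peak) :
    φ R' = φ R := by
  classical
  set g : ℕ → (Fin n → Pref) := fun k i => if (i : ℕ) < k then R' i else R i with hg
  have key : ∀ k, φ (g k) = φ R := by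
    intro k
    induction k with
    | zero =>
      have : g 0 = R := by funext i; simp [hg]
      rw [this]
    | succ k ih =>
      by_cases hk : k < n
      · have hup : g (k + 1) = Function.update (g k) ⟨k, hk⟩ (R' ⟨k, hk⟩) := by
          funext i
          by_cases hik : i = (⟨k, hk⟩ : Fin n)
          · subst hik
            simp [hg, Function.update_self]
          · have hik' : (i : ℕ) ≠ k := fun hc => hik (Fin.ext hc)
            rw [Function.update_of_ne hik]
            have : (i : ℕ) < k + 1 ↔ (i : ℕ) < k := by omega
            simp only [hg]
            by_cases hlt : (i : ℕ) < k
            · rw [if_pos (this.mpr hlt), if_pos hlt]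
            · rw [if_neg (fun hc => hlt (this.mp hc)), if_neg hlt]
        have hpk : (R' ⟨k, hk⟩).peak = ((g k) ⟨k, hk⟩).peak := by
          have : g k ⟨k, hk⟩ = R ⟨k, hk⟩ := by simp [hg]
          rw [this]; exact h _
        have h1 := hop (g k) ⟨k, hk⟩ (R' ⟨k, hk⟩) hpk
        have h2 := hnb (g k) ⟨k, hk⟩ (R' ⟨k, hk⟩) h1
        rw [hup, h2, ih]
      · have : g (k + 1) = g k := by
          funext i
          have h1 : (i : ℕ) < k := lt_of_lt_of_le i.isLt (not_lt.mp hk)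
          simp [hg, h1, Nat.lt_succ_of_lt h1]
        rw [this, ih]
  have hgn : g n = R' := by
    funext i; simp [hg, i.isLt]
  rw [← hgn]; exact key n

/-- with more than two agents, no rule satisfies efficiency,
own-peak-onliness, and non-bossiness. -/
theorem stmt_5 (n : ℕ) (hn : 2 < n) (Ω : ℝ) (hΩ : 0 < Ω) :
    ¬ ∃ φ : (Fin n → Pref) → Fin n → ℝ,
      (∀ R, Feasible Ω (φ R)) ∧ Efficient Ω φ ∧ OwnPeakOnly φ ∧ NonBossy φ := by
  classical
  rintro ⟨φ, hF, hE, hOP, hNB⟩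
  have hn3 : (3 : ℝ) ≤ (n : ℝ) := by exact_mod_cast hn
  have hden : (0 : ℝ) < 2 * (n : ℝ) - 3 := by linarith
  set c : ℝ := 2 * Ω / (2 * (n : ℝ) - 3) with hc
  have hcpos : 0 < c := by positivity
  -- base profile: everyone has peak c
  set R0 : Fin n → Pref := fun _ => mkPref c c hcpos.le with hR0
  set x : Fin n → ℝ := φ R0 with hx
  obtain ⟨hxnn, hxsum⟩ := hF R0
  -- key existence claim
  have hkey : ∃ j k : Fin n, j ≠ k ∧ x j ≠ c ∧ x k ≠ c ∧ 0 < x j := by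
    by_contra hcon
    push_neg at hcon
    set B : Finset (Fin n) := Finset.univ.filter (fun i => x i ≠ c) with hB
    -- sum over A := Bᶜ is card * c
    have hAsum : ∑ i ∈ Finset.univ \ B, x i
        = ((Finset.univ \ B).card : ℝ) * c := by
      rw [Finset.sum_congr rfl (fun i hi => ?_), Finset.sum_const, nsmul_eq_mul]
      simp only [hB, Finset.mem_sdiff, Finset.mem_filter, Finset.mem_univ, true_and,
        not_not] at hi
      exact hi
    have hcardsplit : (Finset.univ \ B).card + B.card = n := by
      rw [Finset.card_sdiff_add_card_eq_card (Finset.filter_subset _ _), Finset.card_univ,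
        Fintype.card_fin]
    by_cases hB2 : 2 ≤ B.card
    · -- some j ∈ B with x j > 0 would give the pair; so all of B is zero
      have hzero : ∀ j ∈ B, x j = 0 := by
        intro j hj
        simp only [hB, Finset.mem_filter, Finset.mem_univ, true_and] at hj
        by_contra hxj
        have hxjpos : 0 < x j := lt_of_le_of_ne (hxnn j) (Ne.symm hxj)
        obtain ⟨k, hk⟩ : ∃ k ∈ B, k ≠ j := by
          have : 1 < B.card := hB2
          obtain ⟨a, ha, b, hb, hab⟩ := Finset.one_lt_card.mp this
          by_cases haj : a = j
          · exact ⟨b, hb, by rw [← haj]; exact fun h => hab h.symm⟩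
          · exact ⟨a, ha, haj⟩
        simp only [hB, Finset.mem_filter, Finset.mem_univ, true_and] at hk
        have := hcon j k (Ne.symm hk.2) hj hk.1
        linarith
      -- then Ω = |A| * c, impossible by parity
      have hsum2 : Ω = ((Finset.univ \ B).card : ℝ) * c := by
        rw [← hxsum, ← Finset.sum_sdiff (Finset.filter_subset (fun i => x i ≠ c) Finset.univ)]
        rw [hAsum, Finset.sum_congr rfl hzero, Finset.sum_const_zero]
        ring
      set a : ℕ := (Finset.univ \ B).card with ha
      have hcval : c * (2 * (n : ℝ) - 3) = 2 * Ω := by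
        rw [hc]; field_simp
      have e1 : Ω * (2 * (n : ℝ) - 3) = Ω * (2 * (a : ℝ)) := by
        linear_combination (a : ℝ) * hcval + (2 * (n : ℝ) - 3) * hsum2
      have h2a : 2 * (n : ℝ) - 3 = 2 * (a : ℝ) := mul_left_cancel₀ (ne_of_gt hΩ) e1
      have hfin : 2 * n = 2 * a + 3 := by
        have : (2 * (n : ℝ)) = 2 * (a : ℝ) + 3 := by linarith
        exact_mod_cast this
      omega
    · -- |B| ≤ 1, so at least n-1 agents get exactly c, total too big
      push_neg at hB2
      have hacard : n - 1 ≤ (Finset.univ \ B).card := by omega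
      have h1 : ((n : ℝ) - 1) * c ≤ ∑ i ∈ Finset.univ \ B, x i := by
        rw [hAsum]
        apply mul_le_mul_of_nonneg_right _ hcpos.le
        have : ((n - 1 : ℕ) : ℝ) ≤ ((Finset.univ \ B).card : ℝ) := by exact_mod_cast hacard
        have hn1 : ((n - 1 : ℕ) : ℝ) = (n : ℝ) - 1 := by
          have : 1 ≤ n := by omega
          push_cast [this]; ring
        linarith
      have h2 : ∑ i ∈ Finset.univ \ B, x i ≤ Ω := by
        rw [← hxsum]
        apply Finset.sum_le_sum_of_subset_of_nonneg (Finset.sdiff_subset)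
        intro i _ _; exact hxnn i
      have hcval : c * (2 * (n : ℝ) - 3) = 2 * Ω := by
        rw [hc]; field_simp
      have h3 : Ω < ((n : ℝ) - 1) * c := by
        nlinarith [hcval, hden, hΩ, hn3, hcpos]
      linarith
  obtain ⟨j, k, hjk, hxjc, hxkc, hxjpos⟩ := hkey
  -- dominating allocation: transfer x j from j to k
  set y : Fin n → ℝ := Function.update (Function.update x j 0) k (x k + x j) with hy
  have hyj : y j = 0 := by
    rw [hy, Function.update_of_ne hjk, Function.update_self]
  have hyk : y k = x k + x j := by rw [hy, Function.update_self]
  have hyi : ∀ i, i ≠ j → i ≠ k → y i = x i := by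
    intro i hij hik
    rw [hy, Function.update_of_ne hik, Function.update_of_ne hij]
  -- new profile with the same peaks
  set R1 : Fin n → Pref := fun i =>
    if i = j then mkPref c 0 hcpos.le
    else if i = k then mkPref c (x k + x j) hcpos.le
    else R0 i with hR1
  have hpeaks : ∀ i, (R1 i).peak = (R0 i).peak := by
    intro i
    simp only [hR1]
    split_ifs <;> rfl
  have hφR1 : φ R1 = x := by
    rw [hx]; exact peak_only φ hOP hNB R0 R1 hpeaks
  apply hE R1
  refine ⟨y, ⟨?_, ?_⟩, ?_, ?_⟩
  · -- nonneg
    intro i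
    by_cases hij : i = j
    · rw [hij, hyj]
    · by_cases hik : i = k
      · rw [hik, hyk]; exact add_nonneg (hxnn k) (hxnn j)
      · rw [hyi i hij hik]; exact hxnn i
  · -- sum
    have hexp : ∀ i : Fin n, y i
        = x i + ((if i = j then -x j else 0) + (if i = k then x j else 0)) := by
      intro i
      by_cases hij : i = j
      · subst hij
        rw [hyj, if_pos rfl, if_neg hjk]; ring
      · by_cases hik : i = k
        · subst hik
          rw [hyk, if_neg hij, if_pos rfl]; ring
        · rw [hyi i hij hik, if_neg hij, if_neg hik]; ring
    rw [Finset.sum_congr rfl (fun i _ => hexp i), Finset.sum_add_distrib,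
      Finset.sum_add_distrib, hxsum]
    rw [Finset.sum_ite_eq' Finset.univ j (fun _ => -x j),
      Finset.sum_ite_eq' Finset.univ k (fun _ => x j)]
    simp
  · -- weak improvement for all
    intro i
    rw [hφR1]
    by_cases hij : i = j
    · have hR1i : R1 i = mkPref c 0 hcpos.le := by
        simp [hR1, hij]
      rw [hR1i, hij, hyj]
      exact (mkPref_P c 0 (x j) hcpos.le hxjc (ne_of_gt hxjpos)).1
    · by_cases hik : i = k
      · have hR1i : R1 i = mkPref c (x k + x j) hcpos.le := by
          simp [hR1, hij, hik, Ne.symm hjk]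
        rw [hR1i, hik, hyk]
        exact (mkPref_P c (x k + x j) (x k) hcpos.le hxkc (by linarith)).1
      · have hR1i : R1 i = mkPref c c hcpos.le := by
          simp [hR1, hij, hik, hR0]
        rw [hR1i, hyi i hij hik]
        exact mkPref_refl c c (x i) hcpos.le
  · -- strict improvement for j
    refine ⟨j, ?_⟩
    rw [hφR1]
    have hR1j : R1 j = mkPref c 0 hcpos.le := by
      simp [hR1]
    rw [hR1j, hyj]
    exact mkPref_P c 0 (x j) hcpos.le hxjc (ne_of_gt hxjpos)
end

section
/- In economies with individual endowments, a rule satisfies unanimity, non-obvious manipulability, own-peak-onliness, and the endowments guarantee if and only if it is an agreeable reallocation rule: there is an ω-agreeable selection S^ω such that each agent i ∈ S^ω(R,ω) receives t(Rᵢ) and each other agent receives ωᵢ. -/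
open Finset

variable {n : ℕ}

/-! Economies with individual endowments. A rule now maps a preference profile and
an endowment profile `ω` to an allocation. -/

/-- Feasibility with individual endowments: nonnegative and summing to `∑ ωᵢ`. -/
def FeasibleE {n : ℕ} (ω x : Fin n → ℝ) : Prop :=
  (∀ i, 0 ≤ x i) ∧ ∑ i, x i = ∑ i, ω i

/-- Unanimity with individual endowments. -/
def UnanimityE {n : ℕ} (φ : (Fin n → Pref) → (Fin n → ℝ) → Fin n → ℝ) : Prop :=
  ∀ (R : Fin n → Pref) (ω : Fin n → ℝ), (∀ i, 0 ≤ ω i) →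
    ∑ i, (R i).peak = ∑ i, ω i → ∀ i, φ R ω i = (R i).peak

/-- Own-peak-onliness with individual endowments. -/
def OwnPeakOnlyE {n : ℕ} (φ : (Fin n → Pref) → (Fin n → ℝ) → Fin n → ℝ) : Prop :=
  ∀ (R : Fin n → Pref) (ω : Fin n → ℝ) (i : Fin n) (Ri' : Pref), (∀ j, 0 ≤ ω j) →
    Ri'.peak = (R i).peak → φ (Function.update R i Ri') ω i = φ R ω i

/-- Endowments guarantee: an agent whose peak equals their endowment gets it. -/
def EndowmentsGuarantee {n : ℕ} (φ : (Fin n → Pref) → (Fin n → ℝ) → Fin n → ℝ) : Prop :=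
  ∀ (R : Fin n → Pref) (ω : Fin n → ℝ) (i : Fin n), (∀ j, 0 ≤ ω j) →
    (R i).peak = ω i → φ R ω i = ω i

/-- Option set with individual endowments (others' preferences vary, `ω` fixed). -/
def OptionSetE {n : ℕ} (φ : (Fin n → Pref) → (Fin n → ℝ) → Fin n → ℝ)
    (ω : Fin n → ℝ) (i : Fin n) (Ri : Pref) : Set ℝ :=
  {x | ∃ R : Fin n → Pref, R i = Ri ∧ φ R ω i = x}

/-- Obvious manipulation with individual endowments. -/
def ObviousManipulationE {n : ℕ} (φ : (Fin n → Pref) → (Fin n → ℝ) → Fin n → ℝ)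
    (ω : Fin n → ℝ) (i : Fin n) (Ri Ri' : Pref) : Prop :=
  (∃ R : Fin n → Pref, R i = Ri ∧ Ri.P (φ (Function.update R i Ri') ω i) (φ R ω i)) ∧
  ∀ x' ∈ OptionSetE φ ω i Ri', ∃ x ∈ OptionSetE φ ω i Ri, Ri.P x' x

/-- Non-obvious manipulability with individual endowments. -/
def NonObviouslyManipulableE {n : ℕ}
    (φ : (Fin n → Pref) → (Fin n → ℝ) → Fin n → ℝ) : Prop :=
  ∀ (ω : Fin n → ℝ), (∀ j, 0 ≤ ω j) →
    ∀ (i : Fin n) (Ri Ri' : Pref), ¬ ObviousManipulationE φ ω i Ri Ri'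

/-- An ω-agreeable selection. -/
def OmegaAgreeableSelection {n : ℕ}
    (Sel : (Fin n → Pref) → (Fin n → ℝ) → Finset (Fin n)) : Prop :=
  (∀ (R : Fin n → Pref) (ω : Fin n → ℝ), (∀ j, 0 ≤ ω j) →
    ∑ j ∈ Sel R ω, (R j).peak = ∑ j ∈ Sel R ω, ω j) ∧
  (∀ (R : Fin n → Pref) (ω : Fin n → ℝ) (i : Fin n) (Ri' : Pref), (∀ j, 0 ≤ ω j) →
    Ri'.peak = (R i).peak → (i ∈ Sel R ω ↔ i ∈ Sel (Function.update R i Ri') ω)) ∧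
  (∀ (R : Fin n → Pref) (ω : Fin n → ℝ), (∀ j, 0 ≤ ω j) →
    ∑ j, (R j).peak = ∑ j, ω j → Sel R ω = Finset.univ)

/-! Auxiliary constructions for the proof. -/

/-- A preference whose peak is `p`, indifferent among all non-peak amounts. -/
def simplePref (p : ℝ) (hp : 0 ≤ p) : Pref where
  R a b := a = p ∨ b ≠ p
  total x y _ _ := by by_cases hx : x = p <;> by_cases hy : y = p <;> tauto
  trans x y z hxy hyz := by tauto
  peak := p
  peak_nonneg := hp
  peak_max x _ := Or.inl rfl
  peak_unique x _ h := by tauto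

/-- Level function: peak `p` best, `w` second-best, everything else worst. -/
noncomputable def lvl (p w a : ℝ) : ℝ := if a = p then 2 else if a = w then 1 else 0

/-- A preference with peak `p` and second-best amount `w`. -/
noncomputable def pref2 (p w : ℝ) (hp : 0 ≤ p) (hne : w ≠ p) : Pref where
  R a b := lvl p w b ≤ lvl p w a
  total x y _ _ := le_total _ _
  trans _ _ _ h1 h2 := le_trans h2 h1
  peak := p
  peak_nonneg := hp
  peak_max x _ := by
    show lvl p w x ≤ lvl p w p
    unfold lvl
    rw [if_pos rfl]
    split_ifs <;> norm_num
  peak_unique x _ h := by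
    by_contra hx
    have h' : lvl p w p ≤ lvl p w x := h
    unfold lvl at h'
    rw [if_pos rfl, if_neg hx] at h'
    split_ifs at h' <;> norm_num at h'

lemma pref2_P (p w x : ℝ) (hp : 0 ≤ p) (hne : w ≠ p) (hxp : x ≠ p) (hxw : x ≠ w) :
    (pref2 p w hp hne).P w x := by
  constructor
  · show lvl p w x ≤ lvl p w w
    unfold lvl
    rw [if_neg hxp, if_neg hxw, if_neg hne, if_pos rfl]
    norm_num
  · show ¬ lvl p w w ≤ lvl p w x
    unfold lvl
    rw [if_neg hxp, if_neg hxw, if_neg hne, if_pos rfl]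
    norm_num

/-- Key lemma: under NOM, own-peak-onliness and the endowments guarantee,
every agent receives either their peak or their endowment. -/
lemma peak_or_endowment {n : ℕ} (φ : (Fin n → Pref) → (Fin n → ℝ) → Fin n → ℝ)
    (hNOM : NonObviouslyManipulableE φ) (hOPO : OwnPeakOnlyE φ)
    (hEG : EndowmentsGuarantee φ)
    (R : Fin n → Pref) (ω : Fin n → ℝ) (hω : ∀ j, 0 ≤ ω j) (i : Fin n)
    (hne : φ R ω i ≠ (R i).peak) : φ R ω i = ω i := by
  by_contra hx
  set x := φ R ω i with hxdef
  set p := (R i).peak with hpdef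
  have hpw : ω i ≠ p := by
    intro h
    exact hx (hEG R ω i hω h.symm)
  set Ri'' : Pref := pref2 p (ω i) (R i).peak_nonneg hpw with hRi''
  set Ri' : Pref := simplePref (ω i) (hω i) with hRi'
  set R' : Fin n → Pref := Function.update R i Ri'' with hR'def
  have hpk'' : Ri''.peak = (R i).peak := rfl
  have hR' : φ R' ω i = x := hOPO R ω i Ri'' hω hpk''
  have hupd : Function.update R' i Ri' = Function.update R i Ri' := by
    rw [hR'def, Function.update_idem]
  have hEGup : φ (Function.update R i Ri') ω i = ω i := by
    apply hEG _ ω i hω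
    rw [Function.update_self]
    rfl
  have hPwx : Ri''.P (ω i) x := pref2_P p (ω i) x (R i).peak_nonneg hpw hne hx
  apply hNOM ω hω i Ri'' Ri'
  constructor
  · refine ⟨R', Function.update_self i Ri'' R, ?_⟩
    rw [hupd, hEGup, hR']
    exact hPwx
  · rintro x' ⟨R₀, hR₀i, hval⟩
    have hx' : x' = ω i := by
      rw [← hval]
      apply hEG _ ω i hω
      rw [hR₀i]
      rfl
    refine ⟨x, ⟨R', Function.update_self i Ri'' R, hR'⟩, ?_⟩
    rw [hx']
    exact hPwx

/-- with individual endowments, a rule satisfies unanimity,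
non-obvious manipulability, own-peak-onliness and the endowments guarantee if and
only if it is an agreeable reallocation rule. -/
theorem stmt_19 (n : ℕ) (hn : 2 ≤ n)
    (φ : (Fin n → Pref) → (Fin n → ℝ) → Fin n → ℝ) :
    ((∀ (R : Fin n → Pref) (ω : Fin n → ℝ), (∀ j, 0 ≤ ω j) → FeasibleE ω (φ R ω)) ∧
      UnanimityE φ ∧ NonObviouslyManipulableE φ ∧ OwnPeakOnlyE φ ∧
      EndowmentsGuarantee φ) ↔
    (∃ Sel : (Fin n → Pref) → (Fin n → ℝ) → Finset (Fin n),
      OmegaAgreeableSelection Sel ∧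
      ∀ (R : Fin n → Pref) (ω : Fin n → ℝ), (∀ j, 0 ≤ ω j) →
        ∀ i, φ R ω i = if i ∈ Sel R ω then (R i).peak else ω i) := by
  classical
  constructor
  · rintro ⟨hF, hU, hNOM, hOPO, hEG⟩
    refine ⟨fun R ω => Finset.univ.filter (fun i => φ R ω i = (R i).peak), ⟨?_, ?_, ?_⟩, ?_⟩
    · intro R ω hω
      set S := Finset.univ.filter (fun i => φ R ω i = (R i).peak) with hS
      have hfeas := hF R ω hω
      have h1 : ∀ j, φ R ω j - ω j =
          if φ R ω j = (R j).peak then (R j).peak - ω j else 0 := by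
        intro j
        split_ifs with h
        · rw [h]
        · rw [peak_or_endowment φ hNOM hOPO hEG R ω hω j h]; ring
      have h2 : ∑ j ∈ S, ((R j).peak - ω j) = 0 := by
        have h3 : ∑ j, (φ R ω j - ω j) = 0 := by
          rw [Finset.sum_sub_distrib, hfeas.2, sub_self]
        calc ∑ j ∈ S, ((R j).peak - ω j)
            = ∑ j, (if φ R ω j = (R j).peak then (R j).peak - ω j else 0) :=
              Finset.sum_filter _ _
          _ = ∑ j, (φ R ω j - ω j) := Finset.sum_congr rfl (fun j _ => (h1 j).symm)
          _ = 0 := h3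
      rw [Finset.sum_sub_distrib] at h2
      linarith
    · intro R ω i Ri' hω hpk
      simp only [Finset.mem_filter, Finset.mem_univ, true_and]
      rw [hOPO R ω i Ri' hω hpk, Function.update_self, hpk]
    · intro R ω hω hsum
      apply Finset.eq_univ_of_forall
      intro i
      simp only [Finset.mem_filter, Finset.mem_univ, true_and]
      exact hU R ω hω hsum i
    · intro R ω hω i
      split_ifs with h
      · simpa using h
      · apply peak_or_endowment φ hNOM hOPO hEG R ω hω i
        simpa using h
  · rintro ⟨Sel, ⟨hSum, hInv, hAll⟩, hφ⟩
    refine ⟨?_, ?_, ?_, ?_, ?_⟩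
    · intro R ω hω
      constructor
      · intro i
        rw [hφ R ω hω i]
        split_ifs
        · exact (R i).peak_nonneg
        · exact hω i
      · have key : ∀ i, φ R ω i = ω i + (if i ∈ Sel R ω then (R i).peak - ω i else 0) := by
          intro i; rw [hφ R ω hω i]; split_ifs <;> ring
        rw [Finset.sum_congr rfl (fun i _ => key i), Finset.sum_add_distrib]
        have hz : ∑ i, (if i ∈ Sel R ω then (R i).peak - ω i else 0) = 0 := by
          rw [← Finset.sum_filter]
          have hfil : Finset.univ.filter (· ∈ Sel R ω) = Sel R ω := by
            ext j; simp
          rw [hfil, Finset.sum_sub_distrib, hSum R ω hω, sub_self]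
        rw [hz, add_zero]
    · intro R ω hω hsum i
      rw [hφ R ω hω i, hAll R ω hω hsum, if_pos (Finset.mem_univ i)]
    · intro ω hω i Ri Ri' hOM
      obtain ⟨_, hDom⟩ := hOM
      have hOmega : ∀ Rj : Pref, ∃ R₀ : Fin n → Pref, R₀ i = Rj ∧ φ R₀ ω i = ω i := by
        intro Rj
        by_cases hpk : Rj.peak = ω i
        · refine ⟨fun _ => Rj, rfl, ?_⟩
          rw [hφ _ ω hω i]
          split_ifs <;> simp [hpk]
        · set C : ℝ := |Rj.peak - ω i| + 1 with hC
          have hC0 : 0 < C := by positivity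
          have hCnn : ∀ j, 0 ≤ ω j + C := fun j => by have := hω j; linarith
          set R₀ : Fin n → Pref :=
            Function.update (fun j => simplePref (ω j + C) (hCnn j)) i Rj with hR₀
          have hR₀i : R₀ i = Rj := Function.update_self _ _ _
          refine ⟨R₀, hR₀i, ?_⟩
          have hnot : i ∉ Sel R₀ ω := by
            intro hmem
            have hs := hSum R₀ ω hω
            have h1 : ∑ j ∈ Sel R₀ ω, ((R₀ j).peak - ω j) = 0 := by
              rw [Finset.sum_sub_distrib, hs, sub_self]
            rw [← Finset.add_sum_erase _ _ hmem] at h1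
            have hR₀ipeak : (R₀ i).peak = Rj.peak := by rw [hR₀i]
            have herase : ∑ j ∈ (Sel R₀ ω).erase i, ((R₀ j).peak - ω j)
                = (((Sel R₀ ω).erase i).card : ℝ) * C := by
              have hval : ∀ j ∈ (Sel R₀ ω).erase i, (R₀ j).peak - ω j = C := by
                intro j hj
                have hji : j ≠ i := Finset.ne_of_mem_erase hj
                rw [hR₀, Function.update_of_ne hji]
                show ω j + C - ω j = C
                ring
              rw [Finset.sum_congr rfl hval, Finset.sum_const, nsmul_eq_mul]
            rw [hR₀ipeak, herase] at h1
            set k := ((Sel R₀ ω).erase i).card with hk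
            rcases Nat.eq_zero_or_pos k with h0 | h0
            · rw [h0] at h1
              simp at h1
              exact hpk (by linarith)
            · have hk1 : (1:ℝ) ≤ (k:ℝ) := by exact_mod_cast h0
              have habs : -|Rj.peak - ω i| ≤ Rj.peak - ω i := neg_abs_le _
              nlinarith
          rw [hφ R₀ ω hω i, if_neg hnot]
      obtain ⟨R₀', hR₀'i, hval'⟩ := hOmega Ri'
      obtain ⟨x, ⟨R₁, hR₁i, hval⟩, hP⟩ := hDom (ω i) ⟨R₀', hR₀'i, hval'⟩
      have hx : x = Ri.peak ∨ x = ω i := by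
        have hh := hφ R₁ ω hω i
        rw [hval, hR₁i] at hh
        split_ifs at hh with h
        · exact Or.inl hh
        · exact Or.inr hh
      rcases hx with h | h
      · exact hP.2 (by rw [h]; exact Ri.peak_max (ω i) (hω i))
      · apply hP.2
        rw [h]
        rcases Ri.total (ω i) (ω i) (hω i) (hω i) with ht | ht <;> exact ht
    · intro R ω i Ri' hω hpk
      rw [hφ _ ω hω i, hφ R ω hω i, Function.update_self]
      by_cases h : i ∈ Sel R ω
      · rw [if_pos ((hInv R ω i Ri' hω hpk).mp h), if_pos h, hpk]
      · rw [if_neg (fun hc => h ((hInv R ω i Ri' hω hpk).mpr hc)), if_neg h]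
    · intro R ω i hω hpk
      rw [hφ R ω hω i]
      split_ifs with h
      · exact hpk
      · rfl
end
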